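/- arXiv:0705.0482 — 2 statements merged into one kernel-verified Lean document; each statement's English description precedes it below -/
import Mathlib

section
/- If b > 1/2 and a ≠ 0, then there exists a constant c_b > 0 (independent of a and η) such that for every η ≠ 0, ∫_{-∞}^{∞} dx / (1 + |a| · |x² − η²|)^{2b} ≤ c_b / (|a| · |η|). -/
/-!
Write `η² = t²` with `t = |η|`. Since `|x - t| + |x + t| ≥ 2t`, one of the two factors of
`x² - t² = (x - t)(x + t)` has modulus at least `t`, so `|a| |x² - t²| ≥ |a| t |x ∓ t|` for one
choice of sign. The integrand, a radially decreasing function of `|a| (x² - t²)`, is therefore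
bounded by the sum of its two rescaled translates `F (|a| t (x - t)) + F (|a| t (x + t))`, where
`F v = (1 + |v|)^(-2b)` is integrable because `2b > 1`; each translate integrates to
`(∫ F) / (|a| t)`.
-/

open MeasureTheory

lemma mul_abs_le_abs_sq_sub_sq (x : ℝ) {t : ℝ} (ht : 0 ≤ t) :
    t * |x - t| ≤ |x ^ 2 - t ^ 2| ∨ t * |x + t| ≤ |x ^ 2 - t ^ 2| := by
  have hfactor : |x ^ 2 - t ^ 2| = |x - t| * |x + t| := by
    rw [← abs_mul]; congr 1; ring
  have hsum : 2 * t ≤ |x - t| + |x + t| := by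
    cases abs_cases (x - t) <;> cases abs_cases (x + t) <;> linarith
  rw [hfactor]
  rcases le_total t |x + t| with h | h
  · exact Or.inl (by nlinarith [abs_nonneg (x - t)])
  · exact Or.inr (by nlinarith [abs_nonneg (x + t)])

section RadiallyAntitone

variable {F : ℝ → ℝ} (hF_nonneg : ∀ v, 0 ≤ F v) (hF_anti : ∀ u v, |u| ≤ |v| → F v ≤ F u)
  {A t : ℝ}

include hF_nonneg hF_anti in
lemma comp_mul_sq_sub_sq_le (hA : 0 ≤ A) (ht : 0 ≤ t) (x : ℝ) :
    F (A * (x ^ 2 - t ^ 2)) ≤ F (A * t * (x - t)) + F (A * t * (x + t)) := by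
  have habs : ∀ s, |A * t * s| = A * (t * |s|) := fun s => by
    rw [abs_mul, abs_mul, abs_of_nonneg hA, abs_of_nonneg ht, mul_assoc]
  rcases mul_abs_le_abs_sq_sub_sq x ht with h | h
  · have := hF_anti (A * t * (x - t)) (A * (x ^ 2 - t ^ 2))
      (by rw [habs, abs_mul, abs_of_nonneg hA]; exact mul_le_mul_of_nonneg_left h hA)
    linarith [hF_nonneg (A * t * (x + t))]
  · have := hF_anti (A * t * (x + t)) (A * (x ^ 2 - t ^ 2))
      (by rw [habs, abs_mul, abs_of_nonneg hA]; exact mul_le_mul_of_nonneg_left h hA)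
    linarith [hF_nonneg (A * t * (x - t))]

variable (hF_int : Integrable F)

include hF_int in
lemma integrable_comp_mul_translates (hAt : A * t ≠ 0) :
    Integrable fun x => F (A * t * (x - t)) + F (A * t * (x + t)) := by
  have hscaled := hF_int.comp_mul_left' hAt
  exact (hscaled.comp_sub_right t).add (hscaled.comp_add_right t)

include hF_nonneg hF_anti hF_int in
lemma integrable_comp_mul_sq_sub_sq (hF_meas : Measurable F) (hA : 0 < A) (ht : 0 < t) :
    Integrable fun x => F (A * (x ^ 2 - t ^ 2)) := by
  refine (integrable_comp_mul_translates hF_int (mul_pos hA ht).ne').mono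
    (by fun_prop : Measurable fun x => F (A * (x ^ 2 - t ^ 2))).aestronglyMeasurable
    (Filter.Eventually.of_forall fun x => ?_)
  rw [Real.norm_of_nonneg (hF_nonneg _),
    Real.norm_of_nonneg (add_nonneg (hF_nonneg _) (hF_nonneg _))]
  exact comp_mul_sq_sub_sq_le hF_nonneg hF_anti hA.le ht.le x

include hF_nonneg hF_anti hF_int in
lemma integral_comp_mul_sq_sub_sq_le (hF_meas : Measurable F) (hA : 0 < A) (ht : 0 < t) :
    ∫ x, F (A * (x ^ 2 - t ^ 2)) ≤ 2 * (∫ v, F v) / (A * t) := by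
  have hAt := mul_pos hA ht
  have hscaled := hF_int.comp_mul_left' hAt.ne'
  calc ∫ x, F (A * (x ^ 2 - t ^ 2))
      ≤ ∫ x, (F (A * t * (x - t)) + F (A * t * (x + t))) :=
        integral_mono (integrable_comp_mul_sq_sub_sq hF_nonneg hF_anti hF_int hF_meas hA ht)
          (integrable_comp_mul_translates hF_int hAt.ne')
          (comp_mul_sq_sub_sq_le hF_nonneg hF_anti hA.le ht.le)
    _ = 2 * (∫ v, F v) / (A * t) := by
        rw [integral_add (hscaled.comp_sub_right t) (hscaled.comp_add_right t),
          integral_sub_right_eq_self (fun y => F (A * t * y)) t,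
          integral_add_right_eq_self (fun y => F (A * t * y)) t,
          Measure.integral_comp_mul_left F (A * t), abs_of_pos (inv_pos.2 hAt), smul_eq_mul]
        field_simp
        ring

end RadiallyAntitone

theorem stmt_0 (b : ℝ) (hb : b > 1/2) :
    ∃ c > 0, ∀ a η : ℝ, a ≠ 0 → η ≠ 0 →
      (∫ x : ℝ, (1 + |a| * |x^2 - η^2|) ^ (-(2*b))) ≤ c / (|a| * |η|) := by
  set F : ℝ → ℝ := fun v => (1 + |v|) ^ (-(2 * b))
  have hF_nonneg : ∀ v, 0 ≤ F v := fun v => Real.rpow_nonneg (by positivity) _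
  have hF_anti : ∀ u v, |u| ≤ |v| → F v ≤ F u := fun u v huv =>
    Real.rpow_le_rpow_of_nonpos (by positivity) (by linarith) (by linarith)
  have hF_int : Integrable F := by
    simpa [F] using integrable_one_add_norm (E := ℝ) (μ := volume) (r := 2 * b)
      (by rw [Module.finrank_self, Nat.cast_one]; linarith)
  have hF_cont : Continuous F :=
    (continuous_const.add continuous_abs).rpow_const fun v =>
      Or.inl (by positivity : (0 : ℝ) < 1 + |v|).ne'
  have hF_pos : 0 < ∫ v, F v :=
    integral_pos_of_integrable_nonneg_nonzero (x := 0) hF_cont hF_int hF_nonneg (by simp [F])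
  refine ⟨2 * ∫ v, F v, by linarith, fun a η ha hη => ?_⟩
  have hcomp : ∀ x, (1 + |a| * |x ^ 2 - η ^ 2|) ^ (-(2 * b)) = F (|a| * (x ^ 2 - |η| ^ 2)) :=
    fun x => by simp only [F, abs_mul, abs_abs, sq_abs]
  simp only [hcomp]
  exact integral_comp_mul_sq_sub_sq_le hF_nonneg hF_anti hF_int hF_cont.measurable
    (abs_pos.2 ha) (abs_pos.2 hη)
end

section
/- Let a, a₀, a₁ be real numbers with a₁ ≠ a₀. Then for all x, τ ∈ ℝ: (1 + |τ + a·x|) / ((1 + |τ + a₀·x|) + (1 + |τ + a₁·x|)) ≤ 1 + |a − a₀| / |a₁ − a₀|. -/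
/-! With `t = (a - a₀) / (a₁ - a₀)`, the value `τ + a x` is the affine combination
`(1 - t) (τ + a₀ x) + t (τ + a₁ x)`; both weights have absolute value at most `1 + |t|`. -/

theorem one_add_norm_affineCombination_le {E : Type*} [SeminormedAddCommGroup E]
    [NormedSpace ℝ E] (p q : E) (t : ℝ) :
    1 + ‖(1 - t) • p + t • q‖ ≤ (1 + |t|) * ((1 + ‖p‖) + (1 + ‖q‖)) := by
  have hcombination : ‖(1 - t) • p + t • q‖ ≤ |1 - t| * ‖p‖ + |t| * ‖q‖ := by
    simpa only [norm_smul, Real.norm_eq_abs] using norm_add_le ((1 - t) • p) (t • q)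
  have hweight : |1 - t| ≤ 1 + |t| := by
    simpa only [abs_one] using abs_sub (1 : ℝ) t
  nlinarith [norm_nonneg p, norm_nonneg q, abs_nonneg t]

theorem stmt_9 (a a₀ a₁ : ℝ) (h : a₁ ≠ a₀) (x τ : ℝ) :
    (1 + |τ + a*x|) / ((1 + |τ + a₀*x|) + (1 + |τ + a₁*x|)) ≤
      1 + |a - a₀| / |a₁ - a₀| := by
  have hne : a₁ - a₀ ≠ 0 := sub_ne_zero.mpr h
  set t := (a - a₀) / (a₁ - a₀)
  have hcombination : τ + a*x = (1 - t) * (τ + a₀*x) + t * (τ + a₁*x) := by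
    simp only [t]
    field_simp
    ring
  rw [← abs_div, div_le_iff₀ (by positivity), hcombination]
  simpa only [smul_eq_mul, Real.norm_eq_abs] using
    one_add_norm_affineCombination_le (τ + a₀*x) (τ + a₁*x) t
end
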